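/- For an even integer ℓ, there exists an acute lattice triangle with lattice perimeter ℓ whose circumcenter is a lattice point if and only if ℓ = 8 or ℓ ≥ 12; moreover no lattice triangle with odd lattice perimeter can have its circumcenter on the lattice. -/

import Mathlib

/-!
Translate the circumcenter to the origin, so that the vertices `a, b, c` lie on a circle
`|z|² = N`. Since `|a|² = |b|²`, both coordinates of `a - b` have the same parity, so the lattice
length of `ab` is congruent to `a₁ - b₁` mod 2 and every perimeter is even.

For a chord `ab` of lattice length `g`, the vector `a + b` is orthogonal to the primitive vector
`e = (a - b) / g`, hence `a + b = t · i e` for an integer `t`; in `ℤ[i]` this says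
`a (t + g i) = b (t - g i)`, i.e. `b` is `a` rotated by twice the argument of `t + g i`. Moreover
`4N = |e|² (t² + g²)` with `3 ∤ |e|²`, and `t ≡ g (mod 2)`. Going once around the triangle the
three rotations compose to the identity, so `(t₁ + g₁ i)(t₂ + g₂ i)(t₃ + g₃ i)` is real, and
acuteness (the centre lies inside the triangle) makes the three `tⱼ` of one sign. A finite search
through these constraints shows that a perimeter at most `10` is `8` or `9`. Perimeters `4m + 8`
and `4m + 14` are realised by two explicit families.
-/

/-- Lattice length of the segment joining two lattice points. -/
def llen (P Q : ℤ × ℤ) : ℕ := Int.gcd (P.1 - Q.1) (P.2 - Q.2)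

/-- Integer dot product on `ℤ × ℤ`. -/
def dotv (u v : ℤ × ℤ) : ℤ := u.1 * v.1 + u.2 * v.2

/-- The three vertices are not collinear (a genuine triangle). -/
def Noncollinear (V₀ V₁ V₂ : ℤ × ℤ) : Prop :=
  (V₁.1 - V₀.1) * (V₂.2 - V₀.2) - (V₂.1 - V₀.1) * (V₁.2 - V₀.2) ≠ 0

/-- All three interior angles are strictly acute (positive dot products at each vertex). -/
def IsAcute (V₀ V₁ V₂ : ℤ × ℤ) : Prop :=
  0 < dotv (V₁ - V₀) (V₂ - V₀) ∧ 0 < dotv (V₀ - V₁) (V₂ - V₁) ∧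
    0 < dotv (V₀ - V₂) (V₁ - V₂)

/-- `H` is the orthocenter of the triangle `V₀V₁V₂`. -/
def IsOrthocenter (H V₀ V₁ V₂ : ℤ × ℤ) : Prop :=
  dotv (H - V₀) (V₁ - V₂) = 0 ∧ dotv (H - V₁) (V₂ - V₀) = 0 ∧
    dotv (H - V₂) (V₀ - V₁) = 0

/-- `F` is the circumcenter of the triangle `V₀V₁V₂` (equidistant from the vertices). -/
def IsCircumcenter (F V₀ V₁ V₂ : ℤ × ℤ) : Prop :=
  dotv (F - V₀) (F - V₀) = dotv (F - V₁) (F - V₁) ∧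
    dotv (F - V₀) (F - V₀) = dotv (F - V₂) (F - V₂)

/-- Lattice perimeter of a lattice triangle. -/
def latPerim (V₀ V₁ V₂ : ℤ × ℤ) : ℕ := llen V₀ V₁ + llen V₁ V₂ + llen V₀ V₂

/-- The interior angle of the triangle at vertex `V`, with the other vertices `A`, `B`. -/
noncomputable def angleAt (V A B : ℤ × ℤ) : ℝ :=
  Real.arccos ((((A.1 - V.1) * (B.1 - V.1) + (A.2 - V.2) * (B.2 - V.2) : ℤ) : ℝ) /
    (Real.sqrt (((A.1 - V.1) ^ 2 + (A.2 - V.2) ^ 2 : ℤ)) *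
      Real.sqrt (((B.1 - V.1) ^ 2 + (B.2 - V.2) ^ 2 : ℤ))))

def cross (u v : ℤ × ℤ) : ℤ := u.1 * v.2 - u.2 * v.1

def toGaussianInt (a : ℤ × ℤ) : GaussianInt := ⟨a.1, a.2⟩

lemma dotv_comm (u v : ℤ × ℤ) : dotv u v = dotv v u := by
  simp only [dotv, mul_comm]

lemma dotv_self_pos {u : ℤ × ℤ} (hu : u ≠ 0) : 0 < dotv u u := by
  obtain ⟨x, y⟩ := u
  have hxy : x ≠ 0 ∨ y ≠ 0 := by simpa [Prod.ext_iff, or_iff_not_imp_left] using hu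
  simp only [dotv]
  rcases hxy with h | h <;> nlinarith [mul_self_pos.mpr h, mul_self_nonneg x, mul_self_nonneg y]

lemma llen_comm (P Q : ℤ × ℤ) : llen P Q = llen Q P := by
  simp only [llen, ← neg_sub P.1, ← neg_sub P.2, Int.gcd_neg, Int.neg_gcd]

lemma llen_sub_right (P Q F : ℤ × ℤ) : llen (P - F) (Q - F) = llen P Q := by
  simp only [llen, Prod.fst_sub, Prod.snd_sub, sub_sub_sub_cancel_right]

lemma latPerim_sub_right (V₀ V₁ V₂ F : ℤ × ℤ) :
    latPerim (V₀ - F) (V₁ - F) (V₂ - F) = latPerim V₀ V₁ V₂ := by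
  simp only [latPerim, llen_sub_right]

lemma isAcute_sub_right (V₀ V₁ V₂ F : ℤ × ℤ) :
    IsAcute (V₀ - F) (V₁ - F) (V₂ - F) ↔ IsAcute V₀ V₁ V₂ := by
  simp only [IsAcute, sub_sub_sub_cancel_right]

lemma IsCircumcenter.dotv_sub_eq {F V₀ V₁ V₂ : ℤ × ℤ} (h : IsCircumcenter F V₀ V₁ V₂) :
    dotv (V₁ - F) (V₁ - F) = dotv (V₀ - F) (V₀ - F) ∧
      dotv (V₂ - F) (V₂ - F) = dotv (V₀ - F) (V₀ - F) := by
  obtain ⟨h₁, h₂⟩ := h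
  simp only [dotv, Prod.fst_sub, Prod.snd_sub] at *
  constructor <;> linarith

lemma IsAcute.pairwise_ne {a b c : ℤ × ℤ} (h : IsAcute a b c) : a ≠ b ∧ b ≠ c ∧ c ≠ a := by
  obtain ⟨h₁, h₂, -⟩ := h
  refine ⟨?_, ?_, ?_⟩ <;> rintro rfl <;> simp [dotv] at *

lemma sub_fst_emod_two_eq_sub_snd {a b : ℤ × ℤ} (h : dotv a a = dotv b b) :
    (a.1 - b.1) % 2 = (a.2 - b.2) % 2 := by
  obtain ⟨k₁, hk₁⟩ := Int.even_mul_pred_self (a.1 - b.1)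
  obtain ⟨k₂, hk₂⟩ := Int.even_mul_pred_self (a.2 - b.2)
  have : (a.1 - b.1) + (a.2 - b.2) = 2 * (dotv b b - dotv a b) - (k₁ + k₁) - (k₂ + k₂) := by
    simp only [dotv] at h ⊢
    linear_combination h - hk₁ - hk₂
  omega

lemma llen_emod_two {a b : ℤ × ℤ} (h : dotv a a = dotv b b) :
    (llen a b : ℤ) % 2 = (a.1 - b.1) % 2 := by
  have hxy := sub_fst_emod_two_eq_sub_snd h
  by_cases h2 : (2 : ℤ) ∣ a.1 - b.1
  · have : (2 : ℤ) ∣ llen a b := Int.dvd_coe_gcd h2 (by omega)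
    omega
  · have : ¬ (2 : ℤ) ∣ llen a b := fun h2' => h2 (h2'.trans (Int.gcd_dvd_left _ _))
    omega

lemma even_latPerim {a b c : ℤ × ℤ} (hb : dotv b b = dotv a a) (hc : dotv c c = dotv a a) :
    Even (latPerim a b c) := by
  have h₁ := llen_emod_two hb.symm
  have h₂ := llen_emod_two (hb.trans hc.symm)
  have h₃ := llen_emod_two hc.symm
  rw [Nat.even_iff]
  unfold latPerim
  omega

lemma three_dvd_sq_add_sq_iff {x y : ℤ} : 3 ∣ x ^ 2 + y ^ 2 ↔ 3 ∣ x ∧ 3 ∣ y := by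
  have key : ∀ u v : ZMod 3, u ^ 2 + v ^ 2 = 0 ↔ u = 0 ∧ v = 0 := by decide
  have hdvd (z : ℤ) : (z : ZMod 3) = 0 ↔ 3 ∣ z := ZMod.intCast_zmod_eq_zero_iff_dvd z 3
  rw [← hdvd, ← hdvd, ← hdvd]
  push_cast
  exact key _ _

lemma emod_two_eq_of_isCoprime {e₁ e₂ g t : ℤ} (he : IsCoprime e₁ e₂)
    (h₁ : 2 ∣ g * e₁ - t * e₂) (h₂ : 2 ∣ t * e₁ + g * e₂) : g % 2 = t % 2 := by
  obtain ⟨u, v, huv⟩ := he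
  have key : ∀ g t e₁ e₂ u v : ZMod 2, u * e₁ + v * e₂ = 1 → g * e₁ - t * e₂ = 0 →
      t * e₁ + g * e₂ = 0 → g = t := by decide
  have hdvd (z : ℤ) : (z : ZMod 2) = 0 ↔ 2 ∣ z := ZMod.intCast_zmod_eq_zero_iff_dvd z 2
  rw [← hdvd] at h₁ h₂
  push_cast at h₁ h₂
  exact (ZMod.intCast_eq_intCast_iff' g t 2).mp
    (key _ _ _ _ u v (by exact_mod_cast congrArg (Int.cast : ℤ → ZMod 2) huv) h₁ h₂)

lemma llen_pos {a b : ℤ × ℤ} (hab : a ≠ b) : 0 < llen a b := by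
  refine Nat.pos_of_ne_zero fun h0 => hab ?_
  rw [llen, Int.gcd_eq_zero_iff] at h0
  exact Prod.ext (by omega) (by omega)

lemma exists_primitive_chord {a b : ℤ × ℤ} (hab : a ≠ b) (h : dotv a a = dotv b b) :
    ∃ e₁ e₂ t : ℤ, IsCoprime e₁ e₂ ∧ a.1 - b.1 = llen a b * e₁ ∧ a.2 - b.2 = llen a b * e₂ ∧
      a.1 + b.1 = -(t * e₂) ∧ a.2 + b.2 = t * e₁ := by
  obtain ⟨e₁, e₂, he, h₁, h₂⟩ := Int.exists_gcd_one (llen_pos hab)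
  obtain ⟨u, v, huv⟩ := Int.isCoprime_iff_gcd_eq_one.mpr he
  change a.1 - b.1 = e₁ * llen a b at h₁
  change a.2 - b.2 = e₂ * llen a b at h₂
  have horth : (a.1 + b.1) * e₁ + (a.2 + b.2) * e₂ = 0 := by
    have : (llen a b : ℤ) * ((a.1 + b.1) * e₁ + (a.2 + b.2) * e₂) = 0 := by
      simp only [dotv] at h
      linear_combination -(a.1 + b.1) * h₁ - (a.2 + b.2) * h₂ + h
    exact (mul_eq_zero.mp this).resolve_left (by exact_mod_cast (llen_pos hab).ne')
  refine ⟨e₁, e₂, u * (a.2 + b.2) - v * (a.1 + b.1), ⟨u, v, huv⟩, by rw [h₁]; ring,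
    by rw [h₂]; ring, ?_, ?_⟩
  · linear_combination u * horth - (a.1 + b.1) * huv
  · linear_combination v * horth - (a.2 + b.2) * huv

/-- The constraints that `exists_half_angle` puts on the lattice length `g` of a chord of the
circle `|z|² = N` and the companion integer `t`. -/
def ChordDatum (N g t : ℤ) : Prop := 0 < g ∧ g % 2 = t % 2 ∧ (3 ∣ N ↔ 3 ∣ g ∧ 3 ∣ t)

lemma ChordDatum.neg {N g t : ℤ} (h : ChordDatum N g t) : ChordDatum N g (-t) := by
  obtain ⟨hg, h2, h3⟩ := h
  exact ⟨hg, by omega, by rwa [Int.dvd_neg]⟩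

lemma exists_half_angle {a b : ℤ × ℤ} (hab : a ≠ b) (h : dotv a a = dotv b b) :
    ∃ t q : ℤ, 0 < q ∧ ChordDatum (dotv a a) (llen a b) t ∧
      2 * cross a b = q * llen a b * t ∧
      toGaussianInt a * ⟨t, llen a b⟩ = toGaussianInt b * star ⟨t, llen a b⟩ := by
  obtain ⟨e₁, e₂, t, he, h₁, h₂, h₃, h₄⟩ := exists_primitive_chord hab h
  have hg : (0 : ℤ) < llen a b := by exact_mod_cast llen_pos hab
  have hq : 0 < e₁ ^ 2 + e₂ ^ 2 := by
    by_contra! h0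
    obtain ⟨rfl, rfl⟩ : e₁ = 0 ∧ e₂ = 0 := by constructor <;> nlinarith
    exact not_isCoprime_zero_zero he
  have h3q : ¬ 3 ∣ e₁ ^ 2 + e₂ ^ 2 := fun h3 => by
    obtain ⟨d₁, d₂⟩ := three_dvd_sq_add_sq_iff.mp h3
    simpa [Int.isUnit_iff] using he.isUnit_of_dvd' d₁ d₂
  have hN : (e₁ ^ 2 + e₂ ^ 2) * ((llen a b : ℤ) ^ 2 + t ^ 2) = 4 * dotv a a := by
    simp only [dotv]
    linear_combination -(2 * a.1 + (llen a b * e₁ - t * e₂)) * (h₁ + h₃) -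
      (2 * a.2 + (llen a b * e₂ + t * e₁)) * (h₂ + h₄)
  refine ⟨t, e₁ ^ 2 + e₂ ^ 2, hq, ⟨hg, ?_, ?_⟩, ?_, ?_⟩
  · exact emod_two_eq_of_isCoprime he ⟨a.1, by linear_combination -h₁ - h₃⟩
      ⟨a.2, by linear_combination -h₂ - h₄⟩
  · rw [show 3 ∣ dotv a a ↔ 3 ∣ 4 * dotv a a by omega, ← hN, Int.prime_three.dvd_mul,
      or_iff_right h3q, three_dvd_sq_add_sq_iff]
  · simp only [cross]
    linear_combination (a.2 + b.2) * h₁ + (llen a b * e₁) * h₄ - (a.1 + b.1) * h₂ -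
      (llen a b * e₂) * h₃
  · ext <;>
      simp only [toGaussianInt, Zsqrtd.re_mul, Zsqrtd.im_mul, Zsqrtd.re_star, Zsqrtd.im_star]
    · linear_combination t * h₁ - llen a b * h₄
    · linear_combination llen a b * h₃ + t * h₂

lemma star_mul_mul_eq_self {R : Type*} [CommRing R] [IsDomain R] [StarRing R]
    {a b c w₁ w₂ w₃ : R} (ha : a ≠ 0) (h₁ : b * w₁ = c * star w₁)
    (h₂ : c * w₂ = a * star w₂) (h₃ : a * w₃ = b * star w₃) :
    star (w₁ * w₂ * w₃) = w₁ * w₂ * w₃ := by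
  refine mul_left_cancel₀ ha ?_
  rw [star_mul', star_mul']
  linear_combination -(w₁ * w₂) * h₃ - (w₂ * star w₃) * h₁ - (star w₁ * star w₃) * h₂

lemma half_angle_sum {a b c : ℤ × ℤ} (ha : a ≠ 0) {g₁ g₂ g₃ t₁ t₂ t₃ : ℤ}
    (h₁ : toGaussianInt b * ⟨t₁, g₁⟩ = toGaussianInt c * star ⟨t₁, g₁⟩)
    (h₂ : toGaussianInt c * ⟨t₂, g₂⟩ = toGaussianInt a * star ⟨t₂, g₂⟩)
    (h₃ : toGaussianInt a * ⟨t₃, g₃⟩ = toGaussianInt b * star ⟨t₃, g₃⟩) :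
    g₁ * t₂ * t₃ + g₂ * t₁ * t₃ + g₃ * t₁ * t₂ = g₁ * g₂ * g₃ := by
  have ha' : toGaussianInt a ≠ 0 := fun h0 =>
    ha (Prod.ext (congrArg Zsqrtd.re h0) (congrArg Zsqrtd.im h0))
  have := congrArg Zsqrtd.im (star_mul_mul_eq_self ha' h₁ h₂ h₃)
  simp only [Zsqrtd.im_star, Zsqrtd.im_mul, Zsqrtd.re_mul] at this
  linarith

/-- The sum of the three cross products is twice the signed area, so the angle at `c` is acute
iff `c` and the centre lie on the same side of `ab`. -/
lemma two_mul_cross_mul_eq {a b c : ℤ × ℤ} (hb : dotv b b = dotv a a)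
    (hc : dotv c c = dotv a a) :
    2 * cross a b * (cross a b + cross b c + cross c a) =
      dotv (a - b) (a - b) * dotv (a - c) (b - c) := by
  simp only [cross, dotv, Prod.fst_sub, Prod.snd_sub] at *
  linear_combination
    (2 * (a.1 * a.1 + a.2 * a.2) - (c.1 * a.1 + c.2 * a.2) - (a.1 * b.1 + a.2 * b.2) +
      (b.1 * c.1 + b.2 * c.2) - (c.1 * c.1 + c.2 * c.2)) * hb +
    (2 * (a.1 * b.1 + a.2 * b.2) - 2 * (a.1 * a.1 + a.2 * a.2)) * hc

lemma IsAcute.cross_mul_pos {a b c : ℤ × ℤ} (h : IsAcute a b c) (hb : dotv b b = dotv a a)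
    (hc : dotv c c = dotv a a) :
    0 < cross b c * (cross a b + cross b c + cross c a) ∧
      0 < cross c a * (cross a b + cross b c + cross c a) ∧
      0 < cross a b * (cross a b + cross b c + cross c a) := by
  obtain ⟨hab, hbc, hca⟩ := h.pairwise_ne
  obtain ⟨hA, hB, hC⟩ := h
  have e₁ := two_mul_cross_mul_eq (hc.trans hb.symm) hb.symm
  have e₂ := two_mul_cross_mul_eq hc.symm (hb.trans hc.symm)
  have e₃ := two_mul_cross_mul_eq hb hc
  have p₁ := mul_pos (dotv_self_pos (sub_ne_zero.mpr hbc)) hA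
  have p₂ := mul_pos (dotv_self_pos (sub_ne_zero.mpr hca)) (dotv_comm (a - b) _ ▸ hB)
  have p₃ := mul_pos (dotv_self_pos (sub_ne_zero.mpr hab)) hC
  refine ⟨?_, ?_, ?_⟩ <;> linarith

lemma sum_eq_eight_or_nine_of_sorted {N g₁ g₂ g₃ t₁ t₂ t₃ : ℤ} (h₁ : ChordDatum N g₁ t₁)
    (h₂ : ChordDatum N g₂ t₂) (h₃ : ChordDatum N g₃ t₃) (ht₁ : 0 < t₁) (ht₂ : 0 < t₂)
    (ht₃ : 0 < t₃) (hstar : g₁ * t₂ * t₃ + g₂ * t₁ * t₃ + g₃ * t₁ * t₂ = g₁ * g₂ * g₃)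
    (h₁₂ : g₁ ≤ g₂) (h₂₃ : g₂ ≤ g₃) (hle : g₁ + g₂ + g₃ ≤ 10) :
    g₁ + g₂ + g₃ = 8 ∨ g₁ + g₂ + g₃ = 9 := by
  obtain ⟨hg₁, p₁, d₁⟩ := h₁
  obtain ⟨hg₂, p₂, d₂⟩ := h₂
  obtain ⟨hg₃, p₃, d₃⟩ := h₃
  have hprod : t₁ * t₂ < g₁ * g₂ := by
    have : 0 < g₁ * t₂ * t₃ + g₂ * t₁ * t₃ := by positivity
    nlinarith
  have b₁ : t₁ < g₁ * g₂ := by nlinarith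
  have b₂ : t₂ < g₁ * g₂ := by nlinarith
  have c₁ : g₁ ≤ 3 := by omega
  have c₂ : g₂ ≤ 4 := by omega
  have c₃ : g₃ ≤ 8 := by omega
  interval_cases g₁ <;> interval_cases g₂ <;> interval_cases g₃ <;> try omega
  all_goals interval_cases t₁ <;> interval_cases t₂ <;> omega

lemma sum_eq_eight_or_nine {N g₁ g₂ g₃ t₁ t₂ t₃ : ℤ} (h₁ : ChordDatum N g₁ t₁)
    (h₂ : ChordDatum N g₂ t₂) (h₃ : ChordDatum N g₃ t₃) (ht₁ : 0 < t₁) (ht₂ : 0 < t₂)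
    (ht₃ : 0 < t₃) (hstar : g₁ * t₂ * t₃ + g₂ * t₁ * t₃ + g₃ * t₁ * t₂ = g₁ * g₂ * g₃)
    (hle : g₁ + g₂ + g₃ ≤ 10) :
    g₁ + g₂ + g₃ = 8 ∨ g₁ + g₂ + g₃ = 9 := by
  rcases le_total g₁ g₂ with h₁₂ | h₁₂ <;> rcases le_total g₂ g₃ with h₂₃ | h₂₃ <;>
    rcases le_total g₁ g₃ with h₁₃ | h₁₃
  all_goals first
    | have := sum_eq_eight_or_nine_of_sorted h₁ h₂ h₃ ht₁ ht₂ ht₃ hstar h₁₂ h₂₃ (by omega); omega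
    | have := sum_eq_eight_or_nine_of_sorted h₁ h₃ h₂ ht₁ ht₃ ht₂ (by linear_combination hstar)
        h₁₃ h₂₃ (by omega); omega
    | have := sum_eq_eight_or_nine_of_sorted h₂ h₁ h₃ ht₂ ht₁ ht₃ (by linear_combination hstar)
        h₁₂ h₁₃ (by omega); omega
    | have := sum_eq_eight_or_nine_of_sorted h₂ h₃ h₁ ht₂ ht₃ ht₁ (by linear_combination hstar)
        h₂₃ h₁₃ (by omega); omega
    | have := sum_eq_eight_or_nine_of_sorted h₃ h₁ h₂ ht₃ ht₁ ht₂ (by linear_combination hstar)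
        h₁₃ h₁₂ (by omega); omega
    | have := sum_eq_eight_or_nine_of_sorted h₃ h₂ h₁ ht₃ ht₂ ht₁ (by linear_combination hstar)
        h₂₃ h₁₂ (by omega); omega

lemma IsAcute.exists_half_angles {a b c : ℤ × ℤ} (h : IsAcute a b c)
    (hb : dotv b b = dotv a a) (hc : dotv c c = dotv a a) :
    ∃ t₁ t₂ t₃ : ℤ, 0 < t₁ ∧ 0 < t₂ ∧ 0 < t₃ ∧ ChordDatum (dotv a a) (llen b c) t₁ ∧
      ChordDatum (dotv a a) (llen c a) t₂ ∧ ChordDatum (dotv a a) (llen a b) t₃ ∧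
      llen b c * t₂ * t₃ + llen c a * t₁ * t₃ + llen a b * t₁ * t₂ =
        (llen b c * llen c a * llen a b : ℤ) := by
  obtain ⟨hab, hbc, hca⟩ := h.pairwise_ne
  have ha : a ≠ 0 := by
    rintro rfl
    have := dotv_self_pos hab.symm
    rw [hb] at this
    simp [dotv] at this
  obtain ⟨s₁, s₂, s₃⟩ := h.cross_mul_pos hb hc
  obtain ⟨t₁, q₁, hq₁, d₁, c₁, r₁⟩ := exists_half_angle hbc (hb.trans hc.symm)
  obtain ⟨t₂, q₂, hq₂, d₂, c₂, r₂⟩ := exists_half_angle hca hc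
  obtain ⟨t₃, q₃, hq₃, d₃, c₃, r₃⟩ := exists_half_angle hab hb.symm
  rw [hb] at d₁
  rw [hc] at d₂
  have hstar := half_angle_sum ha r₁ r₂ r₃
  set D := cross a b + cross b c + cross c a
  have sign {x q g t : ℤ} (hq : 0 < q) (hg : 0 < g) (hx : 2 * x = q * g * t)
      (hxD : 0 < x * D) : 0 < t * D :=
    pos_of_mul_pos_right (a := q * g)
      (by rw [show q * g * (t * D) = 2 * (x * D) by linear_combination -D * hx]; linarith)
      (by positivity)
  have ht₁ := sign hq₁ d₁.1 c₁ s₁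
  have ht₂ := sign hq₂ d₂.1 c₂ s₂
  have ht₃ := sign hq₃ d₃.1 c₃ s₃
  rcases lt_or_gt_of_ne (show D ≠ 0 by rintro h0; simp [h0] at s₁) with hD | hD
  · exact ⟨-t₁, -t₂, -t₃, by nlinarith, by nlinarith, by nlinarith, d₁.neg, d₂.neg, d₃.neg,
      by linear_combination hstar⟩
  · exact ⟨t₁, t₂, t₃, pos_of_mul_pos_left ht₁ hD.le, pos_of_mul_pos_left ht₂ hD.le,
      pos_of_mul_pos_left ht₃ hD.le, d₁, d₂, d₃, hstar⟩

lemma latPerim_eq_eight_or_nine {a b c : ℤ × ℤ} (hb : dotv b b = dotv a a)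
    (hc : dotv c c = dotv a a) (h : IsAcute a b c) (hle : latPerim a b c ≤ 10) :
    latPerim a b c = 8 ∨ latPerim a b c = 9 := by
  obtain ⟨t₁, t₂, t₃, ht₁, ht₂, ht₃, d₁, d₂, d₃, hstar⟩ := h.exists_half_angles hb hc
  have hsum : (latPerim a b c : ℤ) = llen b c + llen c a + llen a b := by
    simp only [latPerim, llen_comm a c]
    push_cast
    ring
  have := sum_eq_eight_or_nine d₁ d₂ d₃ ht₁ ht₂ ht₃ hstar (by omega)
  omega

lemma exists_acute_latPerim_four_mul_add_eight (m : ℕ) :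
    ∃ V₀ V₁ V₂ F : ℤ × ℤ, IsAcute V₀ V₁ V₂ ∧ IsCircumcenter F V₀ V₁ V₂ ∧
      latPerim V₀ V₁ V₂ = 4 * m + 8 := by
  refine ⟨(-(m + 2), m + 1), (-(m + 1), -(m + 2)), (m + 2, m + 1), 0, ?_, ?_, ?_⟩
  · simp only [IsAcute, dotv, Prod.fst_sub, Prod.snd_sub]
    refine ⟨?_, ?_, ?_⟩ <;> nlinarith [(m.cast_nonneg : (0 : ℤ) ≤ m)]
  · simp only [IsCircumcenter, dotv, Prod.fst_sub, Prod.snd_sub, Prod.fst_zero, Prod.snd_zero]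
    constructor <;> ring
  · simp only [latPerim, llen, Int.gcd_eq_natAbs]
    rw [show (-((m : ℤ) + 2) - -(m + 1)).natAbs = 1 by omega,
      show ((m : ℤ) + 1 - -(m + 2)).natAbs = 2 * m + 3 by omega,
      show (-((m : ℤ) + 1) - (m + 2)).natAbs = 2 * m + 3 by omega,
      show (-((m : ℤ) + 2) - (m + 1)).natAbs = 2 * m + 3 by omega,
      show (-((m : ℤ) + 2) - (m + 2)).natAbs = 2 * m + 4 by omega,
      show ((m : ℤ) + 1 - (m + 1)).natAbs = 0 by omega]
    simp only [Nat.gcd_add_self_right, Nat.gcd_one_left, Nat.gcd_self, Nat.gcd_zero_right]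
    omega

lemma exists_acute_latPerim_four_mul_add_fourteen (m : ℕ) :
    ∃ V₀ V₁ V₂ F : ℤ × ℤ, IsAcute V₀ V₁ V₂ ∧ IsCircumcenter F V₀ V₁ V₂ ∧
      latPerim V₀ V₁ V₂ = 4 * m + 14 := by
  refine ⟨(-4 - 5 * m, 1 - 3 * m), (1 - 3 * m, -4 - 5 * m), (4 + 3 * m, 1 + 5 * m), 0,
    ?_, ?_, ?_⟩
  · simp only [IsAcute, dotv, Prod.fst_sub, Prod.snd_sub]
    refine ⟨?_, ?_, ?_⟩ <;> nlinarith [(m.cast_nonneg : (0 : ℤ) ≤ m)]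
  · simp only [IsCircumcenter, dotv, Prod.fst_sub, Prod.snd_sub, Prod.fst_zero, Prod.snd_zero]
    constructor <;> ring
  · simp only [latPerim, llen, Int.gcd_eq_natAbs]
    rw [show (-4 - 5 * (m : ℤ) - (1 - 3 * m)).natAbs = 2 * m + 5 by omega,
      show (1 - 3 * (m : ℤ) - (-4 - 5 * m)).natAbs = 2 * m + 5 by omega,
      show (1 - 3 * (m : ℤ) - (4 + 3 * m)).natAbs = 3 * (2 * m + 1) by omega,
      show (-4 - 5 * (m : ℤ) - (1 + 5 * m)).natAbs = 5 * (2 * m + 1) by omega,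
      show (-4 - 5 * (m : ℤ) - (4 + 3 * m)).natAbs = 8 * (m + 1) by omega,
      show (1 - 3 * (m : ℤ) - (1 + 5 * m)).natAbs = 8 * m by omega,
      Nat.gcd_self, Nat.gcd_mul_right, Nat.gcd_mul_left]
    simp only [Nat.reduceGcd, one_mul, Nat.gcd_self_add_left, Nat.gcd_one_left, mul_one]
    omega

theorem stmt17 (ℓ : ℕ) :
    (Even ℓ →
      ((∃ V₀ V₁ V₂ F : ℤ × ℤ, IsAcute V₀ V₁ V₂ ∧ IsCircumcenter F V₀ V₁ V₂ ∧
          latPerim V₀ V₁ V₂ = ℓ) ↔ (ℓ = 8 ∨ 12 ≤ ℓ))) ∧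
    (Odd ℓ →
      ¬ ∃ V₀ V₁ V₂ F : ℤ × ℤ, Noncollinear V₀ V₁ V₂ ∧ IsCircumcenter F V₀ V₁ V₂ ∧
          latPerim V₀ V₁ V₂ = ℓ) := by
  refine ⟨fun hℓ => ?_, ?_⟩
  · rw [Nat.even_iff] at hℓ
    constructor
    · rintro ⟨V₀, V₁, V₂, F, hacute, hF, rfl⟩
      obtain ⟨hb, hc⟩ := hF.dotv_sub_eq
      rw [← isAcute_sub_right V₀ V₁ V₂ F] at hacute
      rw [← latPerim_sub_right V₀ V₁ V₂ F] at hℓ ⊢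
      have := latPerim_eq_eight_or_nine hb hc hacute
      omega
    · intro h
      by_cases h4 : ℓ % 4 = 0
      · obtain ⟨V₀, V₁, V₂, F, hacute, hF, hP⟩ :=
          exists_acute_latPerim_four_mul_add_eight ((ℓ - 8) / 4)
        exact ⟨V₀, V₁, V₂, F, hacute, hF, by omega⟩
      · obtain ⟨V₀, V₁, V₂, F, hacute, hF, hP⟩ :=
          exists_acute_latPerim_four_mul_add_fourteen ((ℓ - 14) / 4)
        exact ⟨V₀, V₁, V₂, F, hacute, hF, by omega⟩
  · rintro hℓ ⟨V₀, V₁, V₂, F, -, hF, rfl⟩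
    obtain ⟨hb, hc⟩ := hF.dotv_sub_eq
    rw [← latPerim_sub_right V₀ V₁ V₂ F] at hℓ
    exact Nat.not_odd_iff_even.mpr (even_latPerim hb hc) hℓ
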